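/- arXiv:0705.3561 — 3 statements merged into one kernel-verified Lean document; each statement's English description precedes it below -/
import Mathlib

section
/- In a QCSP φ, if every outcome t satisfies t[x_i := a] ∈ sol^φ for a fixed existential variable x_i and value a ∈ D_{x_i}, then every outcome t satisfies t[x_i := a] ∈ out^φ. (Hence 'deep fixability with sol' equals 'deep fixability with out'.) -/
structure QCSP (n : ℕ) (α : Type) where
  Q : Fin n → Bool
  D : Fin n → Set α
  C : Set (Set (Fin n → α))

namespace QCSP

variable {n : ℕ} {α : Type}

/-- Solutions: tuples in the product of the domains satisfying every constraint. -/
def sol (φ : QCSP n α) : Set (Fin n → α) :=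
  {t | (∀ i, t i ∈ φ.D i) ∧ ∀ c ∈ φ.C, t ∈ c}

/-- A strategy assigns to each existential variable `i` a value in `D i`, depending
only on the universal variables preceding `i`. -/
def IsStrategy (φ : QCSP n α) (s : Fin n → (Fin n → α) → α) : Prop :=
  (∀ i, φ.Q i = true → ∀ t, s i t ∈ φ.D i) ∧
  (∀ i, φ.Q i = true → ∀ t t' : Fin n → α,
      (∀ j, j < i → φ.Q j = false → t j = t' j) → s i t = s i t')

/-- Scenarios of a strategy `s`: tuples in the product of the domains whose
existential components follow `s`. -/
def sce (φ : QCSP n α) (s : Fin n → (Fin n → α) → α) : Set (Fin n → α) :=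
  {t | (∀ i, t i ∈ φ.D i) ∧ ∀ i, φ.Q i = true → t i = s i t}

/-- A winning strategy: a strategy all of whose scenarios are solutions. -/
def Winning (φ : QCSP n α) (s : Fin n → (Fin n → α) → α) : Prop :=
  φ.IsStrategy s ∧ φ.sce s ⊆ φ.sol

/-- Outcomes: the union of the scenario sets of all winning strategies. -/
def out (φ : QCSP n α) : Set (Fin n → α) :=
  {t | ∃ s, φ.Winning s ∧ t ∈ φ.sce s}

end QCSP

theorem deep_fixable_sol_iff_out {n : ℕ} {α : Type} (φ : QCSP n α)
    (i : Fin n) (a : α) (hex : φ.Q i = true) (ha : a ∈ φ.D i)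
    (h : ∀ t ∈ φ.out, Function.update t i a ∈ φ.sol) :
    ∀ t ∈ φ.out, Function.update t i a ∈ φ.out := by
  rintro t ⟨s, ⟨⟨hD, hdep⟩, hwin⟩, htD, hts⟩
  set s' : Fin n → (Fin n → α) → α := Function.update s i (fun _ => a) with hs'
  have hs'i : ∀ u, s' i u = a := fun u => by simp [hs']
  have hs'j : ∀ j, j ≠ i → s' j = s j := fun j hj => by simp [hs', hj]
  refine ⟨s', ⟨⟨?_, ?_⟩, ?_⟩, ?_, ?_⟩
  · intro j hj u
    rcases eq_or_ne j i with hji | hji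
    · rw [hji, hs'i]; exact hji ▸ ha
    · rw [hs'j j hji]; exact hD j hj u
  · intro j hj u u' huu
    rcases eq_or_ne j i with hji | hji
    · rw [hji, hs'i, hs'i]
    · rw [hs'j j hji]; exact hdep j hj u u' huu
  · rintro u ⟨huD, hus⟩
    have hui : u i = a := by rw [hus i hex, hs'i]
    set t' : Fin n → α := Function.update u i (s i u) with ht'
    have ht'j : ∀ j, j ≠ i → t' j = u j := fun j hj => Function.update_of_ne hj _ _
    have hsame : ∀ k, φ.Q k = true → s k t' = s k u := by
      intro k hk
      exact hdep k hk t' u (fun j _ hjf => ht'j j (fun hji => by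
        rw [hji, hex] at hjf; exact Bool.noConfusion hjf))
    have ht's : t' ∈ φ.sce s := by
      constructor
      · intro j
        rcases eq_or_ne j i with hji | hji
        · rw [hji]; simp only [ht', Function.update_self]; exact hD i hex u
        · rw [ht'j j hji]; exact huD j
      · intro j hj
        rcases eq_or_ne j i with hji | hji
        · subst hji; simp only [ht', Function.update_self]; exact (hsame j hj).symm
        · rw [ht'j j hji, hsame j hj, ← hs'j j hji]; exact hus j hj
    have ht'out : t' ∈ φ.out := ⟨s, ⟨⟨hD, hdep⟩, hwin⟩, ht's⟩
    have hsol := h t' ht'out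
    have heq : Function.update t' i a = u := by
      funext j
      rcases eq_or_ne j i with hji | hji
      · rw [hji, Function.update_self, hui]
      · rw [Function.update_of_ne hji, ht'j j hji]
    rwa [heq] at hsol
  · intro j
    rcases eq_or_ne j i with hji | hji
    · rw [hji, Function.update_self]; exact ha
    · rw [Function.update_of_ne hji]; exact htD j
  · intro j hj
    rcases eq_or_ne j i with hji | hji
    · rw [hji, Function.update_self, hs'i]
    · rw [Function.update_of_ne hji, hs'j j hji, hts j hj]
      exact hdep j hj t (Function.update t i a) (fun k _ hkf =>
        (Function.update_of_ne (fun hki => by rw [hki, hex] at hkf; exact Bool.noConfusion hkf) _ _).symm)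
end

section
/- In a QCSP φ with existential variable x_i and values a,b ∈ D_{x_i}: if for every outcome t with t_{x_i} = a one has t[x_i := b] ∈ sol^φ, then for every outcome t with t_{x_i} = a one has t[x_i := b] ∈ out^φ. -/
theorem deep_substitutable_sol_iff_out {n : ℕ} {α : Type} (φ : QCSP n α)
    (i : Fin n) (a b : α) (hex : φ.Q i = true) (ha : a ∈ φ.D i) (hb : b ∈ φ.D i)
    (h : ∀ t ∈ φ.out, t i = a → Function.update t i b ∈ φ.sol) :
    ∀ t ∈ φ.out, t i = a → Function.update t i b ∈ φ.out := by
  classical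
  rintro t ⟨s, ⟨⟨hsD, hsdep⟩, hwin⟩, htD, hts⟩ hta
  set s' : Fin n → (Fin n → α) → α := fun j u =>
    if j = i then (if s i u = a then b else s i u) else s j u with hs'
  -- key: s j (update u i c) = s j u for existential j
  have hupd : ∀ (j : Fin n), φ.Q j = true → ∀ (u : Fin n → α) (c : α),
      s j (Function.update u i c) = s j u := by
    intro j hj u c
    apply hsdep j hj
    intro k _ hk
    have : k ≠ i := by rintro rfl; rw [hex] at hk; exact Bool.noConfusion hk
    simp [Function.update_of_ne this]
  have hs'strat : φ.IsStrategy s' := by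
    constructor
    · intro j hj u
      by_cases hji : j = i
      · subst hji
        simp only [hs', if_pos rfl]
        split
        · exact hb
        · exact hsD j hj u
      · simpa [hs', hji] using hsD j hj u
    · intro j hj u u' hag
      by_cases hji : j = i
      · subst hji
        simp only [hs', if_pos rfl, hsdep j hj u u' hag]
      · simp only [hs', if_neg hji, hsdep j hj u u' hag]
  have hs'win : φ.sce s' ⊆ φ.sol := by
    rintro u ⟨huD, hus⟩
    by_cases hcase : s i u = a
    · -- u i = b; consider u' = update u i a
      have hub : u i = b := by
        have := hus i hex
        simpa [hs', hcase] using this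
      set u' := Function.update u i a with hu'
      have hu'sce : u' ∈ φ.sce s := by
        constructor
        · intro k
          by_cases hk : k = i
          · subst hk; simpa [hu'] using ha
          · simpa [hu', Function.update_of_ne hk] using huD k
        · intro k hk
          rw [hupd k hk u a]
          by_cases hki : k = i
          · subst hki
            simp [hu', hcase]
          · have := hus k hk
            simp only [hs', if_neg hki] at this
            simpa [hu', Function.update_of_ne hki] using this
      have hu'out : u' ∈ φ.out := ⟨s, ⟨⟨hsD, hsdep⟩, hwin⟩, hu'sce⟩
      have hu'a : u' i = a := by simp [hu']
      have := h u' hu'out hu'a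
      have heq : Function.update u' i b = u := by
        funext k
        by_cases hk : k = i
        · subst hk; simp [hub]
        · simp [hu', Function.update_of_ne hk]
      rwa [heq] at this
    · -- u ∈ sce s directly
      apply hwin
      refine ⟨huD, fun k hk => ?_⟩
      by_cases hki : k = i
      · subst hki
        have := hus k hk
        simpa [hs', hcase] using this
      · have := hus k hk
        simpa [hs', hki] using this
  refine ⟨s', ⟨hs'strat, hs'win⟩, ?_, ?_⟩
  · intro k
    by_cases hk : k = i
    · subst hk; simpa using hb
    · simpa [Function.update_of_ne hk] using htD k
  · intro k hk
    by_cases hki : k = i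
    · subst hki
      have : s k (Function.update t k b) = a := by
        rw [hupd k hk t b, ← hts k hk, hta]
      simp [hs', this]
    · rw [show s' k = s k from by simp [hs', hki], hupd k hk t b,
        Function.update_of_ne hki, hts k hk]
end

section
/- Correctness of shallow fixability for existential variables: if value a ∈ D_{x_i} is shallow-fixable for an existential variable x_i in φ = (X,Q,D,C), and φ' is φ with D_{x_i} replaced by {a}, then φ has a winning strategy if and only if φ' has a winning strategy. -/
/-!
Playing `a` at `x_i` is harmless: whatever the universal player did before `x_i`, the
existential player completes that prefix with a winning strategy `s`, which yields an outcome;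
shallow fixability then provides an outcome of some winning strategy `s₂` with the same prefix
and `x_i = a`, and from `x_i` on the existential player follows `s₂`. Since `s₂` only looks at
the universal prefix, every play of the combined strategy is a scenario of `s₂`, hence a solution.
-/

namespace QCSP

variable {n : ℕ} {α : Type}

theorem winning_of_domain_subset (φ : QCSP n α) (D : Fin n → Set α)
    (hD : ∀ j, D j ⊆ φ.D j) (hDuniv : ∀ j, φ.Q j = false → D j = φ.D j)
    {s : Fin n → (Fin n → α) → α} (hs : (QCSP.mk φ.Q D φ.C).Winning s) : φ.Winning s := by
  obtain ⟨⟨hsD, hsdep⟩, hsol⟩ := hs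
  refine ⟨⟨fun j hj t => hD j (hsD j hj t), hsdep⟩, fun t ht => ⟨ht.1, ?_⟩⟩
  have htD : ∀ j, t j ∈ D j := by
    intro j
    cases hq : φ.Q j
    · exact hDuniv j hq ▸ ht.1 j
    · exact ht.2 j hq ▸ hsD j hq t
  exact (hsol ⟨htD, ht.2⟩).2

section Scenarios

variable {φ : QCSP n α} {s : Fin n → (Fin n → α) → α}

def completion (φ : QCSP n α) (s : Fin n → (Fin n → α) → α) (t : Fin n → α) : Fin n → α :=
  fun j => if φ.Q j = true then s j t else t j

theorem completion_mem_sce (hs : φ.IsStrategy s) {t : Fin n → α} (ht : ∀ j, t j ∈ φ.D j) :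
    φ.completion s t ∈ φ.sce s := by
  refine ⟨fun j => ?_, fun j hj => ?_⟩
  · unfold completion
    split_ifs with hq
    exacts [hs.1 j hq t, ht j]
  · simp only [completion, hj, if_true]
    exact hs.2 j hj _ _ fun k _ hk => by simp [completion, hk]

theorem completion_eq_of_agree (hs : φ.IsStrategy s) {k : Fin n} {t t' : Fin n → α}
    (h : ∀ j, j < k → φ.Q j = false → t j = t' j) (j : Fin n) (hj : j < k) :
    φ.completion s t j = φ.completion s t' j := by
  unfold completion
  split_ifs with hq
  · exact hs.2 j hq t t' fun l hl => h l (hl.trans hj)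
  · exact h j hj (by simpa using hq)

theorem mem_sce_of_agree (hs : φ.IsStrategy s) {i : Fin n} {t t' : Fin n → α}
    (ht' : t' ∈ φ.sce s) (hD : ∀ j, t j ∈ φ.D j) (hagree : ∀ j, j ≤ i → t j = t' j)
    (hafter : ∀ j, i < j → φ.Q j = true → t j = s j t) : t ∈ φ.sce s := by
  refine ⟨hD, fun j hj => ?_⟩
  rcases lt_or_ge i j with hij | hji
  · exact hafter j hij hj
  · rw [hagree j hji, ht'.2 j hj]
    exact hs.2 j hj t' t fun k hk _ => (hagree k (hk.le.trans hji)).symm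

end Scenarios

section ShallowFix

variable {φ : QCSP n α} {i : Fin n} {a : α} {s : Fin n → (Fin n → α) → α}

def assign (φ : QCSP n α) (i : Fin n) (a : α) : QCSP n α :=
  ⟨φ.Q, Function.update φ.D i {a}, φ.C⟩

theorem assign_D_self : (φ.assign i a).D i = {a} := Function.update_self _ _ _

theorem assign_D_of_ne {j : Fin n} (hj : j ≠ i) : (φ.assign i a).D j = φ.D j :=
  Function.update_of_ne hj _ _

theorem assign_D_subset (ha : a ∈ φ.D i) (j : Fin n) : (φ.assign i a).D j ⊆ φ.D j := by
  rcases eq_or_ne j i with rfl | hj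
  · simpa [assign_D_self] using ha
  · exact (assign_D_of_ne hj).subset

def FixWitness (φ : QCSP n α) (i : Fin n) (a : α) (u : Fin n → α)
    (s₂ : Fin n → (Fin n → α) → α) : Prop :=
  φ.Winning s₂ ∧ ∃ t ∈ φ.sce s₂, (∀ j, j < i → u j = t j) ∧ t i = a

/-- Depends on `u` only through `u j` for `j < i` (`continuation_congr`), so that
`shallowFixStrategy` respects the quantifier order. -/
noncomputable def continuation (φ : QCSP n α) (i : Fin n) (a : α)
    (s : Fin n → (Fin n → α) → α) (u : Fin n → α) : Fin n → (Fin n → α) → α :=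
  open Classical in if h : ∃ s₂, φ.FixWitness i a u s₂ then h.choose else s

noncomputable def shallowFixStrategy (φ : QCSP n α) (i : Fin n) (a : α)
    (s : Fin n → (Fin n → α) → α) : Fin n → (Fin n → α) → α :=
  fun j t => if j < i then s j t else if j = i then a
    else φ.continuation i a s (φ.completion s t) j t

theorem continuation_congr {u u' : Fin n → α} (h : ∀ j, j < i → u j = u' j) :
    φ.continuation i a s u = φ.continuation i a s u' := by
  have hprefix : ∀ t : Fin n → α, (∀ j, j < i → u j = t j) ↔ (∀ j, j < i → u' j = t j) :=
    fun t => forall₂_congr fun j hj => by rw [h j hj]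
  have hwitness : φ.FixWitness i a u = φ.FixWitness i a u' := by
    funext s₂
    simp only [FixWitness, hprefix]
  rw [continuation, continuation, hwitness]

theorem continuation_winning (hs : φ.Winning s) (u : Fin n → α) :
    φ.Winning (φ.continuation i a s u) := by
  unfold continuation
  split_ifs with h
  exacts [h.choose_spec.1, hs]

theorem continuation_fixWitness {u : Fin n → α} (h : ∃ s₂, φ.FixWitness i a u s₂) :
    φ.FixWitness i a u (φ.continuation i a s u) := by
  simp only [continuation, dif_pos h]
  exact h.choose_spec

theorem shallowFixStrategy_isStrategy (hs : φ.Winning s) :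
    (φ.assign i a).IsStrategy (φ.shallowFixStrategy i a s) := by
  refine ⟨fun j hj t => ?_, fun j hj t t' h => ?_⟩
  · unfold shallowFixStrategy
    split_ifs with hlt heq
    · rw [assign_D_of_ne hlt.ne]
      exact hs.1.1 j hj t
    · rw [heq, assign_D_self]
      rfl
    · rw [assign_D_of_ne heq]
      exact (continuation_winning hs _).1.1 j hj t
  · unfold shallowFixStrategy
    split_ifs with hlt heq
    · exact hs.1.2 j hj t t' h
    · rfl
    · have hij : i < j := lt_of_le_of_ne (not_lt.mp hlt) (Ne.symm heq)
      rw [continuation_congr (completion_eq_of_agree hs.1 fun k hk => h k (hk.trans hij))]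
      exact (continuation_winning hs _).1.2 j hj t t' h

theorem shallowFixStrategy_winning (ha : a ∈ φ.D i)
    (hfix : ∀ t ∈ φ.out, ∃ t' ∈ φ.out, (∀ j, j < i → t j = t' j) ∧ t' i = a)
    (hs : φ.Winning s) : (φ.assign i a).Winning (φ.shallowFixStrategy i a s) := by
  refine ⟨shallowFixStrategy_isStrategy hs, fun t ht => ⟨ht.1, ?_⟩⟩
  have htD : ∀ j, t j ∈ φ.D j := fun j => assign_D_subset ha j (ht.1 j)
  have hti : t i = a := by simpa [assign_D_self] using ht.1 i
  have hprefix : ∀ j, j < i → t j = φ.completion s t j := by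
    intro j hj
    unfold completion
    split_ifs with hq
    · simpa [shallowFixStrategy, hj] using ht.2 j hq
    · rfl
  obtain ⟨t', ⟨s₂, hs₂, ht'⟩, hagree, ht'i⟩ :=
    hfix _ ⟨s, hs, completion_mem_sce hs.1 htD⟩
  obtain ⟨hwin, t'', ht'', hagree'', ht''i⟩ :=
    continuation_fixWitness (s := s) ⟨s₂, hs₂, t', ht', hagree, ht'i⟩
  have htsce : t ∈ φ.sce (φ.continuation i a s (φ.completion s t)) := by
    refine mem_sce_of_agree hwin.1 ht'' htD (i := i) (fun j hj => ?_) (fun j hij hj => ?_)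
    · rcases hj.lt_or_eq with hj | rfl
      · rw [hprefix j hj, hagree'' j hj]
      · rw [hti, ht''i]
    · simpa [shallowFixStrategy, hij.not_gt, hij.ne'] using ht.2 j hj
  exact (hwin.2 htsce).2

end ShallowFix

end QCSP

theorem shallow_fixable_correct {n : ℕ} {α : Type} (φ : QCSP n α)
    (i : Fin n) (a : α) (hex : φ.Q i = true) (ha : a ∈ φ.D i)
    (hfix : ∀ t ∈ φ.out, ∃ t' ∈ φ.out, (∀ j, j < i → t j = t' j) ∧ t' i = a) :
    (∃ s, φ.Winning s) ↔
      ∃ s, (QCSP.mk φ.Q (Function.update φ.D i {a}) φ.C).Winning s := by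
  constructor
  · rintro ⟨s, hs⟩
    exact ⟨φ.shallowFixStrategy i a s, QCSP.shallowFixStrategy_winning ha hfix hs⟩
  · rintro ⟨s, hs⟩
    refine ⟨s, φ.winning_of_domain_subset _ (QCSP.assign_D_subset ha) (fun j hj => ?_) hs⟩
    exact QCSP.assign_D_of_ne (by rintro rfl; simp [hex] at hj)
end
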